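/- Let α and γ be finite types and let T be a row-stochastic matrix on α ⊕ γ such that every state Sum.inl a is absorbing, and suppose det (1 - S2) ≠ 0. Then there exists a unique vector t : (α ⊕ γ) → ℝ satisfying (i) t (Sum.inl a) = 0 for all a : α, and (ii) t (Sum.inr b) = 1 + ∑ s', T (Sum.inr b) s' * t s' for all b : γ; moreover t s = ∑ b : γ, det (M.updateColumn s (e b)) / det M, where e b : α ⊕ γ → ℝ is the standard basis vector supported at Sum.inr b and M.updateColumn s (e b) replaces the column of M indexed by s with e b. -/

import Mathlib

/-! Conditions (i) and (ii) say exactly that `M *ᵥ t = u`, where `u` is `0` on the absorbing states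
and `1` on the transient ones. Since `det M = ± det (1 - S2) ≠ 0`, this linear system has a unique
solution, and Cramer's rule, together with linearity of the determinant in the replaced column and
`u = ∑ b, e b`, gives the formula. -/

namespace Matrix

section Cramer

variable {n R K : Type*} [Fintype n] [DecidableEq n]

theorem cramer_mulVec [CommRing R] (A : Matrix n n R) (x : n → R) :
    cramer A (A *ᵥ x) = A.det • x := by
  rw [cramer_eq_adjugate_mulVec, mulVec_mulVec, adjugate_mul, smul_mulVec, one_mulVec]

theorem det_updateCol_finset_sum [CommRing R] {ι : Type*} (A : Matrix n n R) (i : n) (s : Finset ι)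
    (f : ι → n → R) : (A.updateCol i (∑ k ∈ s, f k)).det = ∑ k ∈ s, (A.updateCol i (f k)).det := by
  simp only [← cramer_apply, ← sum_cramer, Finset.sum_apply]

theorem existsUnique_mulVec_eq [Field K] {A : Matrix n n K} (hA : A.det ≠ 0) (b : n → K) :
    ∃! x, A *ᵥ x = b :=
  have hAu : IsUnit A := (isUnit_iff_isUnit_det A).2 hA.isUnit
  Function.Bijective.existsUnique
    ⟨mulVec_injective_iff_isUnit.2 hAu, mulVec_surjective_iff_isUnit.2 hAu⟩ b

theorem eq_det_updateCol_div_det_of_mulVec_eq [Field K] {A : Matrix n n K} {x b : n → K}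
    (hA : A.det ≠ 0) (h : A *ᵥ x = b) (i : n) : x i = (A.updateCol i b).det / A.det := by
  rw [eq_div_iff hA, ← cramer_apply, ← h, cramer_mulVec, Pi.smul_apply, smul_eq_mul, mul_comm]

end Cramer

section Absorbing

variable {α γ R : Type*} [Fintype α] [Fintype γ] [DecidableEq α] [DecidableEq γ]

theorem det_neg_fromBlocks_one_zero_sub_one [CommRing R] (C : Matrix γ α R) (D : Matrix γ γ R) :
    (-fromBlocks 1 0 C (D - 1)).det = (-1) ^ Fintype.card α * (1 - D).det := by
  rw [fromBlocks_neg, neg_zero, neg_sub, det_fromBlocks_zero₁₂, det_neg, det_one, mul_one]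

theorem neg_fromBlocks_mulVec_eq_elim_zero_one_iff [Ring R] (T : Matrix (α ⊕ γ) (α ⊕ γ) R)
    (t : α ⊕ γ → R) :
    (-fromBlocks 1 0 T.toBlocks₂₁ (T.toBlocks₂₂ - 1)) *ᵥ t = Sum.elim (0 : α → R) 1 ↔
      (∀ a, t (.inl a) = 0) ∧ ∀ b, t (.inr b) = 1 + ∑ s, T (.inr b) s * t s := by
  have hrow : ∀ b, ∑ s, T (.inr b) s * t s =
      (T.toBlocks₂₁ *ᵥ (t ∘ .inl)) b + (T.toBlocks₂₂ *ᵥ (t ∘ .inr)) b := fun b => by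
    simp [Fintype.sum_sum_type, mulVec, dotProduct, toBlocks₂₁, toBlocks₂₂]
  simp only [neg_mulVec, fromBlocks_mulVec, one_mulVec, zero_mulVec, add_zero, sub_mulVec,
    funext_iff, Sum.forall, Pi.neg_apply, Sum.elim_inl, Sum.elim_inr, Function.comp_apply,
    Pi.zero_apply, Pi.one_apply, neg_eq_zero, hrow]
  refine and_congr_right fun h0 => ?_
  have hinl : t ∘ .inl = 0 := funext h0
  simp only [hinl, mulVec_zero, zero_add, Pi.sub_apply, Pi.zero_apply, neg_sub, sub_eq_iff_eq_add,
    Function.comp_apply]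

end Absorbing

end Matrix

open Matrix

theorem absorption_time_formula_general {α γ : Type*} [Fintype α] [Fintype γ]
    [DecidableEq α] [DecidableEq γ]
    (T : Matrix (α ⊕ γ) (α ⊕ γ) ℝ)
    (S1 : Matrix γ α ℝ) (hS1 : S1 = Matrix.of fun b a => T (Sum.inr b) (Sum.inl a))
    (S2 : Matrix γ γ ℝ) (hS2 : S2 = Matrix.of fun b b' => T (Sum.inr b) (Sum.inr b'))
    (M : Matrix (α ⊕ γ) (α ⊕ γ) ℝ) (hM : M = -Matrix.fromBlocks 1 0 S1 (S2 - 1))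
    (hdet : Matrix.det (1 - S2) ≠ 0) :
    (∃! t : (α ⊕ γ) → ℝ,
      (∀ a : α, t (Sum.inl a) = 0) ∧
      (∀ b : γ, t (Sum.inr b) = 1 + ∑ s', T (Sum.inr b) s' * t s')) ∧
    (∀ t : (α ⊕ γ) → ℝ,
      ((∀ a : α, t (Sum.inl a) = 0) ∧
       (∀ b : γ, t (Sum.inr b) = 1 + ∑ s', T (Sum.inr b) s' * t s')) →
      ∀ s : α ⊕ γ,
        t s = ∑ b : γ,
          Matrix.det (M.updateCol s fun x => if x = Sum.inr b then 1 else 0)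
            / Matrix.det M) := by
  have hsys (t : α ⊕ γ → ℝ) : ((∀ a, t (.inl a) = 0) ∧
      ∀ b, t (.inr b) = 1 + ∑ s', T (.inr b) s' * t s') ↔ M *ᵥ t = Sum.elim (0 : α → ℝ) 1 := by
    rw [hM, hS1, hS2]
    exact (neg_fromBlocks_mulVec_eq_elim_zero_one_iff T t).symm
  have hdetM : M.det ≠ 0 := by
    rw [hM, det_neg_fromBlocks_one_zero_sub_one]
    exact mul_ne_zero (pow_ne_zero _ (neg_ne_zero.2 one_ne_zero)) hdet
  have hbasis : Sum.elim (0 : α → ℝ) 1 = ∑ b : γ, fun x => if x = .inr b then 1 else 0 := by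
    ext (a | b) <;> simp
  simp only [hsys]
  refine ⟨existsUnique_mulVec_eq hdetM _, fun t ht s => ?_⟩
  rw [eq_det_updateCol_div_det_of_mulVec_eq hdetM ht, hbasis, det_updateCol_finset_sum,
    Finset.sum_div]

theorem absorption_time_formula {α γ : Type*} [Fintype α] [Fintype γ]
    [DecidableEq α] [DecidableEq γ]
    (T : Matrix (α ⊕ γ) (α ⊕ γ) ℝ)
    (hT0 : ∀ s s', 0 ≤ T s s') (hT1 : ∀ s, ∑ s', T s s' = 1)
    (habs : ∀ (a : α) (s' : α ⊕ γ),
      T (Sum.inl a) s' = if s' = Sum.inl a then 1 else 0)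
    (S1 : Matrix γ α ℝ) (hS1 : S1 = Matrix.of fun b a => T (Sum.inr b) (Sum.inl a))
    (S2 : Matrix γ γ ℝ) (hS2 : S2 = Matrix.of fun b b' => T (Sum.inr b) (Sum.inr b'))
    (M : Matrix (α ⊕ γ) (α ⊕ γ) ℝ) (hM : M = -Matrix.fromBlocks 1 0 S1 (S2 - 1))
    (hdet : Matrix.det (1 - S2) ≠ 0) :
    (∃! t : (α ⊕ γ) → ℝ,
      (∀ a : α, t (Sum.inl a) = 0) ∧
      (∀ b : γ, t (Sum.inr b) = 1 + ∑ s', T (Sum.inr b) s' * t s')) ∧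
    (∀ t : (α ⊕ γ) → ℝ,
      ((∀ a : α, t (Sum.inl a) = 0) ∧
       (∀ b : γ, t (Sum.inr b) = 1 + ∑ s', T (Sum.inr b) s' * t s')) →
      ∀ s : α ⊕ γ,
        t s = ∑ b : γ,
          Matrix.det (M.updateCol s fun x => if x = Sum.inr b then 1 else 0)
            / Matrix.det M) :=
  absorption_time_formula_general T S1 hS1 S2 hS2 M hM hdet
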